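/- A random vector (X₁, …, Xₙ) is comonotonic if and only if there exist a random variable Z and non-decreasing functions f₁, …, fₙ : ℝ → ℝ such that (X₁, …, Xₙ) has the same distribution as (f₁(Z), …, fₙ(Z)). -/

import Mathlib

open MeasureTheory ProbabilityTheory
open scoped NNReal

/-- Value at risk: left-continuous generalized inverse of the distribution function. -/
noncomputable def VaR {Ω : Type*} [MeasurableSpace Ω] (P : Measure Ω) (X : Ω → ℝ) (α : ℝ) : ℝ :=
  sInf {x : ℝ | α ≤ (P {ω | X ω ≤ x}).toReal}

/-- A set `A ⊆ ℝⁿ` is comonotonic. -/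
def ComonotonicSet {n : ℕ} (A : Set (Fin n → ℝ)) : Prop :=
  ∀ x ∈ A, ∀ y ∈ A, (∃ i, x i < y i) → ∀ j, x j ≤ y j

/-- Topological support of a measure. -/
def measSupport {E : Type*} [TopologicalSpace E] [MeasurableSpace E] (μ : Measure E) : Set E :=
  {x | ∀ U : Set E, IsOpen U → x ∈ U → 0 < μ U}

/-- A random vector is comonotonic iff the support of its distribution is comonotonic. -/
def Comonotonic {Ω : Type*} [MeasurableSpace Ω] (P : Measure Ω) {n : ℕ}
    (X : Fin n → Ω → ℝ) : Prop :=
  ComonotonicSet (measSupport (P.map (fun ω i => X i ω)))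

/-- An atomless probability space. -/
def Atomless {Ω : Type*} [MeasurableSpace Ω] (P : Measure Ω) : Prop :=
  ∀ A : Set Ω, MeasurableSet A → 0 < P A →
    ∃ B, MeasurableSet B ∧ B ⊆ A ∧ 0 < P B ∧ P B < P A

/-- `U` is uniformly distributed on `(0,1)`. -/
def UniformOn01 {Ω : Type*} [MeasurableSpace Ω] (P : Measure Ω) (U : Ω → ℝ) : Prop :=
  P.map U = volume.restrict (Set.Ioo (0 : ℝ) 1)

private lemma measSupport_compl_eq {E : Type*} [TopologicalSpace E] [MeasurableSpace E]
    (μ : Measure E) : (measSupport μ)ᶜ = ⋃₀ {U : Set E | IsOpen U ∧ μ U = 0} := by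
  ext x
  simp only [measSupport, Set.mem_compl_iff, Set.mem_setOf_eq, Set.mem_sUnion]
  constructor
  · intro h
    push_neg at h
    obtain ⟨U, hU, hx, hpos⟩ := h
    exact ⟨U, ⟨hU, le_antisymm hpos zero_le⟩, hx⟩
  · rintro ⟨U, ⟨hU, hμ⟩, hx⟩
    push_neg
    exact ⟨U, hU, hx, by simp [hμ]⟩

private lemma isOpen_measSupport_compl {E : Type*} [TopologicalSpace E] [MeasurableSpace E]
    (μ : Measure E) : IsOpen (measSupport μ)ᶜ := by
  rw [measSupport_compl_eq]
  exact isOpen_sUnion (fun U hU => hU.1)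

private lemma measSupport_compl_null {E : Type*} [TopologicalSpace E] [MeasurableSpace E]
    [SecondCountableTopology E] (μ : Measure E) :
    μ (measSupport μ)ᶜ = 0 := by
  obtain ⟨T, hTc, hTsub, hT⟩ := TopologicalSpace.isOpen_sUnion_countable
    {U : Set E | IsOpen U ∧ μ U = 0} (fun s hs => hs.1)
  rw [measSupport_compl_eq, ← hT]
  exact (measure_sUnion_null_iff hTc).mpr (fun s hs => (hTsub hs).2)

private lemma measSupport_map_subset {Ω : Type*} [MeasurableSpace Ω] (P : Measure Ω) {n : ℕ}
    {g : Ω → Fin n → ℝ} (hg : Measurable g) :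
    measSupport (P.map g) ⊆ closure (Set.range g) := by
  intro x hx
  by_contra hxc
  have hU : IsOpen (closure (Set.range g))ᶜ := isClosed_closure.isOpen_compl
  have hpos := hx _ hU hxc
  rw [Measure.map_apply hg hU.measurableSet] at hpos
  have hemp : g ⁻¹' (closure (Set.range g))ᶜ = ∅ := by
    ext ω
    simp only [Set.mem_preimage, Set.mem_compl_iff, Set.mem_empty_iff_false, iff_false, not_not]
    exact subset_closure (Set.mem_range_self ω)
  rw [hemp] at hpos
  simp at hpos

private lemma comonotonicSet_closure_range {n : ℕ} (f : Fin n → ℝ → ℝ)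
    (hf : ∀ i, Monotone (f i)) :
    ComonotonicSet (closure (Set.range (fun z (i : Fin n) => f i z))) := by
  intro x hx y hy h j
  obtain ⟨i, hi⟩ := h
  obtain ⟨u, hu, hux⟩ := mem_closure_iff_seq_limit.mp hx
  obtain ⟨v, hv, hvy⟩ := mem_closure_iff_seq_limit.mp hy
  have hui : ∀ k : Fin n, Filter.Tendsto (fun m => u m k) Filter.atTop (nhds (x k)) :=
    fun k => ((continuous_apply k).tendsto x).comp hux
  have hvi : ∀ k : Fin n, Filter.Tendsto (fun m => v m k) Filter.atTop (nhds (y k)) :=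
    fun k => ((continuous_apply k).tendsto y).comp hvy
  have hev : ∀ᶠ m in Filter.atTop, u m i < v m i := (hui i).eventually_lt (hvi i) hi
  refine le_of_tendsto_of_tendsto (hui j) (hvi j) ?_
  filter_upwards [hev] with m hm
  obtain ⟨z, hz⟩ := hu m
  obtain ⟨w, hw⟩ := hv m
  rw [← hz, ← hw] at hm ⊢
  simp only at hm ⊢
  have hzw : z ≤ w := by
    by_contra hc
    push_neg at hc
    exact absurd (hf i hc.le) (not_le.mpr hm)
  exact hf j hzw

theorem comonotonic_iff_monotone_functions {Ω : Type*} [MeasurableSpace Ω]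
    (P : Measure Ω) [IsProbabilityMeasure P]
    {n : ℕ} (X : Fin n → Ω → ℝ) (hX : ∀ i, Measurable (X i)) :
    Comonotonic P X ↔
    ∃ (Z : Ω → ℝ) (f : Fin n → ℝ → ℝ), Measurable Z ∧ (∀ i, Monotone (f i)) ∧
      P.map (fun ω i => X i ω) = P.map (fun ω i => f i (Z ω)) := by
  have hXm : Measurable (fun ω i => X i ω) := measurable_pi_lambda _ hX
  constructor
  · intro hC
    set μ := P.map (fun ω i => X i ω) with hμdef
    have hμprob : IsProbabilityMeasure μ := Measure.isProbabilityMeasure_map hXm.aemeasurable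
    set A := measSupport μ with hAdef
    have hA : ComonotonicSet A := hC
    have hAnull : μ Aᶜ = 0 := measSupport_compl_null μ
    have hAne : A.Nonempty := by
      rw [Set.nonempty_iff_ne_empty]
      intro h
      have huniv : (Set.univ : Set (Fin n → ℝ)) = Aᶜ := by rw [h]; simp
      have := measure_univ (μ := μ)
      rw [huniv, hAnull] at this
      simp at this
    obtain ⟨x0, hx0⟩ := hAne
    set s : (Fin n → ℝ) → ℝ := fun x => ∑ i, x i with hs
    have key : ∀ x ∈ A, ∀ y ∈ A, s x ≤ s y → ∀ j, x j ≤ y j := by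
      intro x hx y hy hsxy j
      by_contra hj
      push_neg at hj
      have hle : ∀ k, y k ≤ x k := hA y hy x hx ⟨j, hj⟩
      have : s y < s x :=
        Finset.sum_lt_sum (fun k _ => hle k) ⟨j, Finset.mem_univ j, hj⟩
      linarith
    set t0 := s x0 with ht0
    set f : Fin n → ℝ → ℝ := fun i t =>
      sSup (insert (x0 i + min (t - t0) 0) ((fun x => x i) '' {x ∈ A | s x ≤ t})) with hf
    have hbdd : ∀ i t,
        BddAbove (insert (x0 i + min (t - t0) 0) ((fun x => x i) '' {x ∈ A | s x ≤ t})) := by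
      intro i t
      refine ⟨max (x0 i) (x0 i + (t - t0)), ?_⟩
      rintro v (rfl | ⟨x, ⟨hxA, hxs⟩, rfl⟩)
      · exact le_max_of_le_left (by linarith [min_le_right (t - t0) (0:ℝ)])
      · rcases le_total (s x) t0 with h | h
        · exact le_max_of_le_left (key x hxA x0 hx0 h i)
        · refine le_max_of_le_right ?_
          have h1 : ∀ k, x0 k ≤ x k := key x0 hx0 x hxA h
          have h2 : x i - x0 i ≤ ∑ k, (x k - x0 k) :=
            Finset.single_le_sum (fun k _ => sub_nonneg.mpr (h1 k)) (Finset.mem_univ i)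
          have h3 : ∑ k, (x k - x0 k) = s x - t0 := by
            rw [Finset.sum_sub_distrib]
          linarith
    have hfmono : ∀ i, Monotone (f i) := by
      intro i t t' htt'
      refine csSup_le (Set.insert_nonempty _ _) ?_
      rintro v (rfl | ⟨x, ⟨hxA, hxs⟩, rfl⟩)
      · calc x0 i + min (t - t0) 0 ≤ x0 i + min (t' - t0) 0 := by
              have : min (t - t0) 0 ≤ min (t' - t0) 0 := min_le_min (by linarith) le_rfl
              linarith
          _ ≤ _ := le_csSup (hbdd i t') (Set.mem_insert _ _)
      · exact le_csSup (hbdd i t') (Set.mem_insert_of_mem _ ⟨x, ⟨hxA, le_trans hxs htt'⟩, rfl⟩)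
    have hfval : ∀ x ∈ A, ∀ i, f i (s x) = x i := by
      intro x hxA i
      refine IsGreatest.csSup_eq ⟨Set.mem_insert_of_mem _ ⟨x, ⟨hxA, le_rfl⟩, rfl⟩, ?_⟩
      rintro v (rfl | ⟨y, ⟨hyA, hys⟩, rfl⟩)
      · rcases le_total t0 (s x) with h | h
        · have h1 := key x0 hx0 x hxA h i
          have h2 : min (s x - t0) 0 ≤ 0 := min_le_right _ _
          linarith
        · have h1 : ∀ k, x k ≤ x0 k := key x hxA x0 hx0 h
          have h2 : x0 i - x i ≤ ∑ k, (x0 k - x k) :=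
            Finset.single_le_sum (fun k _ => sub_nonneg.mpr (h1 k)) (Finset.mem_univ i)
          have h3 : ∑ k, (x0 k - x k) = t0 - s x := by
            rw [Finset.sum_sub_distrib]
          have h4 : min (s x - t0) 0 = s x - t0 := min_eq_left (by linarith)
          linarith
      · exact key y hyA x hxA hys i
    refine ⟨fun ω => ∑ i, X i ω, f, Finset.univ.measurable_sum (fun i _ => hX i), hfmono, ?_⟩
    refine Measure.map_congr ?_
    have hAc : MeasurableSet (Aᶜ : Set (Fin n → ℝ)) := (isOpen_measSupport_compl μ).measurableSet
    have hae : ∀ᵐ ω ∂P, (fun i => X i ω) ∈ A := by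
      rw [ae_iff]
      have : {ω | ¬ (fun i => X i ω) ∈ A} = (fun ω i => X i ω) ⁻¹' Aᶜ := rfl
      rw [this, ← Measure.map_apply hXm hAc]
      exact hAnull
    filter_upwards [hae] with ω hω
    funext i
    exact (hfval _ hω i).symm
  · rintro ⟨Z, f, hZ, hfmono, hmap⟩
    unfold Comonotonic
    rw [hmap]
    have hg : Measurable (fun ω i => f i (Z ω)) :=
      measurable_pi_lambda _ (fun i => ((hfmono i).measurable).comp hZ)
    intro x hx y hy h j
    have hsub := measSupport_map_subset P hg
    have hrange : (Set.range fun ω (i : Fin n) => f i (Z ω)) ⊆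
        Set.range (fun z (i : Fin n) => f i z) := by
      rintro w ⟨ω, rfl⟩
      exact ⟨Z ω, rfl⟩
    have hclos : measSupport (P.map fun ω i => f i (Z ω)) ⊆
        closure (Set.range (fun z (i : Fin n) => f i z)) :=
      hsub.trans (closure_mono hrange)
    exact comonotonicSet_closure_range f hfmono x (hclos hx) y (hclos hy) h j
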